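/- arXiv:math/0509146 — 3 statements merged into one kernel-verified Lean document; each statement's English description precedes it below -/
import Mathlib

section
/- The cross product on ℝ⁷ defined from the imaginary octonions, x × y = Im(x · y) where x, y are purely imaginary octonions, is a compatible cross product: x × y is orthogonal to x and y, and ‖x × y‖² = ‖x‖²‖y‖² − ⟨x,y⟩². -/
/-!
The octonions form a composition algebra: `|xy|² = |x|²|y|²`, `⟨xy, x⟩ = |x|² Re y`,
`⟨xy, y⟩ = |y|² Re x` and `Re (xy) = 2 Re x Re y - ⟨x, y⟩`, all polynomial identities in the
eight quaternion coordinates. For imaginary `x, y` the middle two give orthogonality of `xy`,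
hence of `x × y = xy + ⟨x, y⟩`, to `x` and `y`, while `Re (xy) = -⟨x, y⟩` turns the norm into
`|x × y|² = |xy|² - 2⟨x, y⟩² + ⟨x, y⟩² = |x|²|y|² - ⟨x, y⟩²`.
-/

noncomputable section

/-- The octonions, as Cayley–Dickson double of the quaternions. -/
abbrev Oct := Quaternion ℝ × Quaternion ℝ

/-- Octonion multiplication via the Cayley–Dickson construction. -/
def omul (x y : Oct) : Oct :=
  (x.1 * y.1 - star y.2 * x.2, y.2 * x.1 + x.2 * star y.1)

/-- The octonion unit. -/
def oone : Oct := (1, 0)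

/-- The inner product on the octonions induced by the octonion norm. -/
def oinner (x y : Oct) : ℝ :=
  (x.1 * star y.1).re + (x.2 * star y.2).re

/-- An octonion is purely imaginary iff its real part vanishes. -/
def oIm (x : Oct) : Prop := x.1.re = 0

/-- The cross product of imaginary octonions: x × y = Im(x·y) = x·y + ⟨x,y⟩·1. -/
def ocross (x y : Oct) : Oct := omul x y + oinner x y • oone

theorem oinner_comm (x y : Oct) : oinner x y = oinner y x := by
  simp only [oinner, ← Quaternion.re_star (y.1 * _), ← Quaternion.re_star (y.2 * _), star_mul,
    star_star]

theorem oinner_add_left (x y z : Oct) : oinner (x + y) z = oinner x z + oinner y z := by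
  simp only [oinner, Prod.fst_add, Prod.snd_add, add_mul, Quaternion.re_add]
  ring

theorem oinner_add_right (x y z : Oct) : oinner x (y + z) = oinner x y + oinner x z := by
  simp only [oinner_comm x, oinner_add_left]

theorem oinner_smul_left (r : ℝ) (x y : Oct) : oinner (r • x) y = r * oinner x y := by
  simp only [oinner, Prod.smul_fst, Prod.smul_snd, smul_mul_assoc, Quaternion.re_smul, smul_eq_mul]
  ring

theorem oinner_smul_right (r : ℝ) (x y : Oct) : oinner x (r • y) = r * oinner x y := by
  simp only [oinner_comm x, oinner_smul_left]

theorem oinner_oone_right (x : Oct) : oinner x oone = x.1.re := by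
  simp only [oinner, oone, star_one, mul_one, star_zero, mul_zero, Quaternion.re_zero, add_zero]

theorem oinner_oone_left (x : Oct) : oinner oone x = x.1.re := by
  rw [oinner_comm, oinner_oone_right]

theorem oinner_oone_oone : oinner oone oone = 1 := by
  rw [oinner_oone_right, oone, Quaternion.re_one]

section CayleyDickson

open Quaternion

theorem omul_fst_re (x y : Oct) : (omul x y).1.re = 2 * x.1.re * y.1.re - oinner x y := by
  simp only [omul, oinner, re_sub, re_mul, re_star, imI_star, imJ_star, imK_star]
  ring

theorem oinner_omul_left (x y : Oct) : oinner (omul x y) x = oinner x x * y.1.re := by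
  simp only [omul, oinner, re_sub, re_add, re_mul, re_star, imI_star, imJ_star, imK_star,
    imI_mul, imJ_mul, imK_mul, imI_sub, imJ_sub, imK_sub, imI_add, imJ_add, imK_add]
  ring

theorem oinner_omul_right (x y : Oct) : oinner (omul x y) y = oinner y y * x.1.re := by
  simp only [omul, oinner, re_sub, re_add, re_mul, re_star, imI_star, imJ_star, imK_star,
    imI_mul, imJ_mul, imK_mul, imI_sub, imJ_sub, imK_sub, imI_add, imJ_add, imK_add]
  ring

theorem oinner_omul_omul (x y : Oct) :
    oinner (omul x y) (omul x y) = oinner x x * oinner y y := by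
  simp only [omul, oinner, re_sub, re_add, re_mul, re_star, imI_star, imJ_star, imK_star,
    imI_mul, imJ_mul, imK_mul, imI_sub, imJ_sub, imK_sub, imI_add, imJ_add, imK_add]
  ring

end CayleyDickson

section Cross

variable {x y : Oct}

theorem oinner_ocross_left_eq_zero (hx : oIm x) (hy : oIm y) : oinner (ocross x y) x = 0 := by
  unfold oIm at hx hy
  rw [ocross, oinner_add_left, oinner_smul_left, oinner_oone_left, oinner_omul_left, hx, hy]
  ring

theorem oinner_ocross_right_eq_zero (hx : oIm x) (hy : oIm y) : oinner (ocross x y) y = 0 := by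
  unfold oIm at hx hy
  rw [ocross, oinner_add_left, oinner_smul_left, oinner_oone_left, oinner_omul_right, hx, hy]
  ring

theorem oinner_ocross_ocross (hx : oIm x) (hy : oIm y) :
    oinner (ocross x y) (ocross x y) = oinner x x * oinner y y - oinner x y ^ 2 := by
  unfold oIm at hx hy
  have hre : (omul x y).1.re = -oinner x y := by rw [omul_fst_re, hx, hy]; ring
  calc oinner (ocross x y) (ocross x y)
      = oinner (omul x y) (omul x y) + 2 * oinner x y * (omul x y).1.re
          + oinner x y ^ 2 * oinner oone oone := by
        simp only [ocross, oinner_add_left, oinner_add_right, oinner_smul_left, oinner_smul_right]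
        rw [oinner_oone_left (omul x y), oinner_oone_right (omul x y)]
        ring
    _ = oinner x x * oinner y y - oinner x y ^ 2 := by
        rw [oinner_omul_omul, hre, oinner_oone_oone]
        ring

end Cross

/-- The cross product of imaginary octonions is a compatible cross product:
it is orthogonal to both factors and satisfies the norm identity. -/
theorem stmt_6 (x y : Oct) (hx : oIm x) (hy : oIm y) :
    oinner (ocross x y) x = 0 ∧ oinner (ocross x y) y = 0 ∧
    oinner (ocross x y) (ocross x y) = oinner x x * oinner y y - oinner x y ^ 2 :=
  ⟨oinner_ocross_left_eq_zero hx hy, oinner_ocross_right_eq_zero hx hy,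
    oinner_ocross_ocross hx hy⟩
end
end

section
/- Let A be the alternating 3-form on ℝ⁷ associated to a compatible cross product via A(x,y,z) = ⟨x × y, z⟩. Then for every unit vector x ∈ S⁶, the 2-form ω_x(y,z) = A(x,y,z) on the tangent space x^⊥ is non-degenerate. -/
open scoped RealInnerProductSpace

noncomputable section

abbrev E7 := EuclideanSpace ℝ (Fin 7)

/-- A compatible (2-fold vector) cross product on ℝ⁷. -/
def IsCompatibleCross (c : E7 →ₗ[ℝ] E7 →ₗ[ℝ] E7) : Prop :=
  (∀ x y : E7, ⟪c x y, x⟫ = 0) ∧ (∀ x y : E7, ⟪c x y, y⟫ = 0) ∧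
  (∀ x y : E7, ‖c x y‖ ^ 2 = ‖x‖ ^ 2 * ‖y‖ ^ 2 - ⟪x, y⟫ ^ 2)

/-- For a compatible cross product and unit vector x, the 2-form
ω_x(y,z) = ⟨x × y, z⟩ on x^⊥ is non-degenerate. -/
theorem stmt_7 (c : E7 →ₗ[ℝ] E7 →ₗ[ℝ] E7) (hc : IsCompatibleCross c)
    (x : E7) (hx : ‖x‖ = 1) :
    ∀ y : E7, ⟪y, x⟫ = 0 → (∀ z : E7, ⟪z, x⟫ = 0 → ⟪c x y, z⟫ = 0) → y = 0 := by
  obtain ⟨h1, h2, h3⟩ := hc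
  intro y hy hz
  have hzero : ⟪c x y, c x y⟫ = 0 := hz (c x y) (h1 x y)
  have hn : ‖c x y‖ ^ 2 = 0 := by
    rw [← real_inner_self_eq_norm_sq, hzero]
  have hxy : ⟪x, y⟫ = 0 := by rw [real_inner_comm]; exact hy
  have := h3 x y
  rw [hn, hx, hxy] at this
  have : ‖y‖ ^ 2 = 0 := by nlinarith
  have : ‖y‖ = 0 := by nlinarith [norm_nonneg y]
  exact norm_eq_zero.mp this
end
end

section
/- For a compatible cross product on ℝ⁷, the identity x × (x × y) = −‖x‖²·y + ⟨x,y⟩·x holds for all x, y ∈ ℝ⁷. -/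
open scoped RealInnerProductSpace

noncomputable section

/-- For a compatible cross product, x × (x × y) = -‖x‖²·y + ⟨x,y⟩·x. -/
theorem stmt_9 (c : E7 →ₗ[ℝ] E7 →ₗ[ℝ] E7) (hc : IsCompatibleCross c) :
    ∀ x y : E7, c x (c x y) = -(‖x‖ ^ 2) • y + ⟪x, y⟫ • x := by
  obtain ⟨h1, h2, h3⟩ := hc
  have hskew : ∀ x y z : E7, ⟪c x y, z⟫ = -⟪c x z, y⟫ := by
    intro x y z
    have := h2 x (y + z)
    simp only [map_add, inner_add_left, inner_add_right, h2] at this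
    linarith [real_inner_comm (c x y) z]
  have hprod : ∀ x y z : E7,
      ⟪c x y, c x z⟫ = ‖x‖ ^ 2 * ⟪y, z⟫ - ⟪x, y⟫ * ⟪x, z⟫ := by
    intro x y z
    have h := h3 x (y + z)
    have e1 : ‖c x (y + z)‖ ^ 2 = ‖c x y‖ ^ 2 + 2 * ⟪c x y, c x z⟫ + ‖c x z‖ ^ 2 := by
      rw [map_add]
      rw [← real_inner_self_eq_norm_sq, ← real_inner_self_eq_norm_sq,
        ← real_inner_self_eq_norm_sq, inner_add_add_self]
      rw [real_inner_comm (c x z) (c x y)]; ring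
    have e2 : ‖(y + z : E7)‖ ^ 2 = ‖y‖ ^ 2 + 2 * ⟪y, z⟫ + ‖z‖ ^ 2 := by
      rw [← real_inner_self_eq_norm_sq, ← real_inner_self_eq_norm_sq,
        ← real_inner_self_eq_norm_sq, inner_add_add_self]
      rw [real_inner_comm z y]; ring
    have e3 : ⟪x, y + z⟫ = ⟪x, y⟫ + ⟪x, z⟫ := inner_add_right x y z
    rw [e1, e2, e3] at h
    have hy := h3 x y
    have hz := h3 x z
    nlinarith [hy, hz]
  intro x y
  apply ext_inner_left ℝ
  intro z
  have : ⟪z, c x (c x y)⟫ = -⟪c x z, c x y⟫ := by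
    rw [real_inner_comm, hskew]
  rw [this, hprod, inner_add_right, inner_smul_right, inner_smul_right]
  rw [real_inner_comm x z]
  ring_nf
end
end
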